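/- For l, l' ∈ ℂ with l ≠ ±l', there is no nonzero linear map on the free module with basis (e_p)_{p∈ℤ} intertwining the sl(2)-actions with parameters l and l' (with the same parity k), because the Casimir Ω = (1/4)H² + (1/2)(EF+FE) acts on the parameter-l principal series module as the scalar (l²-1)/4. -/

import Mathlib

/-! E, F and H are weighted shifts of the basis, and weighted shifts compose by adding the
shifts and multiplying the weights. Hence Ω is the weighted shift by `0` whose weight, a priori
quadratic in `p`, is the constant `(l² - 1)/4`. An intertwiner commutes with Ω, so it
intertwines the scalars `(l² - 1)/4` and `(l'² - 1)/4`, which differ unless `l = ±l'`;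
it must therefore vanish. -/

/-- Operator on the free ℂ-module on basis `(e_p)_{p ∈ ℤ}` (encoded as `ℤ →₀ ℂ`)
sending `e_p` to `a p • e_(p+s)`. -/
noncomputable def sop (a : ℤ → ℂ) (s : ℤ) : Module.End ℂ (ℤ →₀ ℂ) :=
  Finsupp.lsum ℂ fun p => a p • Finsupp.lsingle (p + s)

/-- `E e_p = (-(p + k/2) - (l-1)/2) e_(p-1)`. -/
noncomputable def Eop (k l : ℂ) : Module.End ℂ (ℤ →₀ ℂ) :=
  sop (fun p => -((p : ℂ) + k / 2) - (l - 1) / 2) (-1)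
/-- `F e_p = ((p + k/2) - (l-1)/2) e_(p+1)`. -/
noncomputable def Fop (k l : ℂ) : Module.End ℂ (ℤ →₀ ℂ) :=
  sop (fun p => ((p : ℂ) + k / 2) - (l - 1) / 2) 1
/-- `H e_p = -2 (p + k/2) e_p`. -/
noncomputable def Hop (k : ℂ) : Module.End ℂ (ℤ →₀ ℂ) :=
  sop (fun p => -2 * ((p : ℂ) + k / 2)) 0

/-- The Casimir operator `Ω = (1/4) H² + (1/2)(EF + FE)` of the parameter-`l`
principal series module. -/
noncomputable def Casimir (k l : ℂ) : Module.End ℂ (ℤ →₀ ℂ) :=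
  (1 / 4 : ℂ) • (Hop k * Hop k) +
    (1 / 2 : ℂ) • (Eop k l * Fop k l + Fop k l * Eop k l)

lemma sop_single (a : ℤ → ℂ) (s p : ℤ) (c : ℂ) :
    sop a s (Finsupp.single p c) = Finsupp.single (p + s) (a p * c) := by
  simp [sop, Finsupp.smul_single]

lemma sop_mul_sop (a b : ℤ → ℂ) (s t : ℤ) :
    sop a s * sop b t = sop (fun p => a (p + t) * b p) (t + s) := by
  refine Finsupp.lhom_ext fun p c => ?_
  simp only [Module.End.mul_apply, sop_single, add_assoc, mul_assoc]

lemma sop_add (a b : ℤ → ℂ) (s : ℤ) : sop (a + b) s = sop a s + sop b s := by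
  refine Finsupp.lhom_ext fun p c => ?_
  simp only [LinearMap.add_apply, sop_single, Pi.add_apply, add_mul, Finsupp.single_add]

lemma sop_smul (c : ℂ) (a : ℤ → ℂ) (s : ℤ) : sop (c • a) s = c • sop a s := by
  refine Finsupp.lhom_ext fun p d => ?_
  simp only [LinearMap.smul_apply, sop_single, Pi.smul_apply, smul_eq_mul, Finsupp.smul_single,
    mul_assoc]

lemma sop_const_zero (c : ℂ) : sop (fun _ => c) 0 = c • 1 := by
  refine Finsupp.lhom_ext fun p d => ?_
  simp [sop_single, Finsupp.smul_single]

lemma casimir_eq_smul_one (k l : ℂ) :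
    Casimir k l = ((l ^ 2 - 1) / 4) • (1 : Module.End ℂ (ℤ →₀ ℂ)) := by
  rw [← sop_const_zero]
  simp only [Casimir, Hop, Eop, Fop, sop_mul_sop, ← sop_smul, add_zero, add_neg_cancel,
    neg_add_cancel, ← sop_add]
  congr 1
  funext p
  simp only [Pi.add_apply, Pi.smul_apply, smul_eq_mul]
  push_cast
  ring

lemma LinearMap.comp_mul_eq_mul_comp {R M N : Type*} [CommSemiring R] [AddCommMonoid M]
    [AddCommMonoid N] [Module R M] [Module R N] (A : M →ₗ[R] N) {X Y : Module.End R M}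
    {X' Y' : Module.End R N} (hX : A ∘ₗ X = X' ∘ₗ A) (hY : A ∘ₗ Y = Y' ∘ₗ A) :
    A ∘ₗ (X * Y) = (X' * Y') ∘ₗ A := by
  simp only [Module.End.mul_eq_comp, ← LinearMap.comp_assoc, hX]
  rw [LinearMap.comp_assoc, hY, LinearMap.comp_assoc]

lemma LinearMap.eq_zero_of_comp_smul_one_eq {K V W : Type*} [Field K] [AddCommGroup V]
    [AddCommGroup W] [Module K V] [Module K W] (A : V →ₗ[K] W) {c c' : K}
    (h : A ∘ₗ (c • 1) = (c' • 1) ∘ₗ A) (hc : c ≠ c') : A = 0 := by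
  ext x
  have hsmul : c • A x = c' • A x := by simpa using LinearMap.congr_fun h x
  have hsub : (c - c') • A x = 0 := by rw [sub_smul, hsmul, sub_self]
  exact (smul_eq_zero.mp hsub).resolve_left (sub_ne_zero.mpr hc)

lemma comp_casimir_eq_casimir_comp (k l l' : ℂ) (A : Module.End ℂ (ℤ →₀ ℂ))
    (hE : A ∘ₗ Eop k l = Eop k l' ∘ₗ A) (hF : A ∘ₗ Fop k l = Fop k l' ∘ₗ A)
    (hH : A ∘ₗ Hop k = Hop k ∘ₗ A) : A ∘ₗ Casimir k l = Casimir k l' ∘ₗ A := by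
  simp only [Casimir, LinearMap.comp_add, LinearMap.add_comp, LinearMap.comp_smul,
    LinearMap.smul_comp, A.comp_mul_eq_mul_comp hH hH, A.comp_mul_eq_mul_comp hE hF,
    A.comp_mul_eq_mul_comp hF hE]

theorem casimir_scalar_and_no_intertwiner_general (k : ℂ) :
    (∀ l : ℂ, Casimir k l = ((l ^ 2 - 1) / 4) • (1 : Module.End ℂ (ℤ →₀ ℂ))) ∧
    (∀ l l' : ℂ, l ≠ l' → l ≠ -l' →
      ∀ A : (ℤ →₀ ℂ) →ₗ[ℂ] (ℤ →₀ ℂ),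
        (A ∘ₗ Eop k l = Eop k l' ∘ₗ A) →
        (A ∘ₗ Fop k l = Fop k l' ∘ₗ A) →
        (A ∘ₗ Hop k = Hop k ∘ₗ A) →
        A = 0) := by
  refine ⟨casimir_eq_smul_one k, fun l l' hne hne_neg A hE hF hH => ?_⟩
  have hΩ := comp_casimir_eq_casimir_comp k l l' A hE hF hH
  rw [casimir_eq_smul_one, casimir_eq_smul_one] at hΩ
  refine A.eq_zero_of_comp_smul_one_eq hΩ fun h => ?_
  have hsq : l ^ 2 = l' ^ 2 := by linear_combination 4 * h
  exact (sq_eq_sq_iff_eq_or_eq_neg.mp hsq).elim hne hne_neg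

theorem casimir_scalar_and_no_intertwiner (k : ℂ) (hk : k = 0 ∨ k = 1) :
    (∀ l : ℂ, Casimir k l = ((l ^ 2 - 1) / 4) • (1 : Module.End ℂ (ℤ →₀ ℂ))) ∧
    (∀ l l' : ℂ, l ≠ l' → l ≠ -l' →
      ∀ A : (ℤ →₀ ℂ) →ₗ[ℂ] (ℤ →₀ ℂ),
        (A ∘ₗ Eop k l = Eop k l' ∘ₗ A) →
        (A ∘ₗ Fop k l = Fop k l' ∘ₗ A) →
        (A ∘ₗ Hop k = Hop k ∘ₗ A) →
        A = 0) :=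
  casimir_scalar_and_no_intertwiner_general k
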